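/- Let d ≥ 3 and let K be an algebraically closed field of characteristic 0. For a tuple 𝐚 = (a_0, a_1, …, a_{d−2}, a_d) with a_0 ≠ 0 and a_d ≠ 0, define the degree-d rational map f_𝐚(x) = (a_0x^d + a_1x^{d−1} + ⋯ + a_{d−2}x^2 + x + a_d)/x on P^1 over K. Suppose 𝐚 and 𝐛 are two such tuples with the property that ∞ is the only fixed point of f_𝐚 at which f_𝐚 is ramified, and likewise ∞ is the only ramified fixed point of f_𝐛. If φ ∈ PGL_2(K) satisfies φ^{-1} ∘ f_𝐚 ∘ φ = f_𝐛, then φ is the identity and 𝐚 = 𝐛. -/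

import Mathlib

open Polynomial
open scoped Classical

noncomputable section

/-- The projective line over `L`: `L` together with a point at infinity (`none`). -/
abbrev ProjLine (L : Type*) := Option L

namespace ProjLine

variable {L : Type*} [Field L]

/-- Value of the rational map `p/q` at a finite point `x`. -/
def evalAt (p q : L[X]) (x : L) : ProjLine L :=
  if q.eval x = 0 then none else some (p.eval x / q.eval x)

/-- Value at a point of the projective line of the degree-`d` morphism whose
dehomogenized description is the pair `(p, q)` (i.e. the morphism
`[Y^d·p(X/Y) : Y^d·q(X/Y)]` in homogeneous coordinates). -/
def eval (d : ℕ) (p q : L[X]) : ProjLine L → ProjLine L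
  | some x => evalAt p q x
  | none => evalAt (p.reflect d) (q.reflect d) 0

/-- Ramification index of `p/q` at a finite point `x`. -/
def ramAt (p q : L[X]) (x : L) : ℕ :=
  if q.eval x = 0 then rootMultiplicity x q
  else rootMultiplicity x (C (q.eval x) * p - C (p.eval x) * q)

/-- Ramification index at a point of the projective line of the degree-`d` morphism
with dehomogenized description `(p, q)`. -/
def ram (d : ℕ) (p q : L[X]) : ProjLine L → ℕ
  | some x => ramAt p q x
  | none => ramAt (p.reflect d) (q.reflect d) 0

/-- The Möbius transformation of the projective line attached to a 2×2 matrix. -/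
def mobius (M : Matrix (Fin 2) (Fin 2) L) : ProjLine L → ProjLine L
  | some x => if M 1 0 * x + M 1 1 = 0 then none
      else some ((M 0 0 * x + M 0 1) / (M 1 0 * x + M 1 1))
  | none => if M 1 0 = 0 then none else some (M 0 0 / M 1 0)

/-- The Sylvester matrix of the binary forms of degrees `d` and `e` whose
dehomogenizations are `p` and `q`. -/
def sylvester (d e : ℕ) (p q : L[X]) : Matrix (Fin (e + d)) (Fin (e + d)) L :=
  Matrix.of fun i j =>
    if (i : ℕ) < e then
      (if (i : ℕ) ≤ (j : ℕ) ∧ (j : ℕ) ≤ (i : ℕ) + d then p.coeff (d + (i : ℕ) - (j : ℕ)) else 0)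
    else
      (if (i : ℕ) - e ≤ (j : ℕ) ∧ (j : ℕ) ≤ ((i : ℕ) - e) + e then
        q.coeff (e + ((i : ℕ) - e) - (j : ℕ)) else 0)

/-- The resultant of the binary forms of degrees `d` and `e` whose dehomogenizations
are `p` and `q`, as a Sylvester determinant. -/
def resultant (d e : ℕ) (p q : L[X]) : L := (sylvester d e p q).det

/-- Reduction of a point of the projective line over `L` modulo (the maximal ideal of)
a valuation subring `O` of `L`. -/
def red (O : ValuationSubring L) : ProjLine L → ProjLine (IsLocalRing.ResidueField ↥O)
  | some x => if h : x ∈ O then some (IsLocalRing.residue ↥O ⟨x, h⟩) else none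
  | none => none

end ProjLine

/-- A pair of polynomials `(p, q)` over a field is the (dehomogenized) description of a
morphism `P¹ → P¹` of degree `d`:  `p` and `q` are coprime, have degree at most `d`,
and at least one of them has degree exactly `d`. -/
def IsRatMapOfDeg {F : Type*} [Field F] (d : ℕ) (p q : F[X]) : Prop :=
  IsCoprime p q ∧ p.natDegree ≤ d ∧ q.natDegree ≤ d ∧ (p.natDegree = d ∨ q.natDegree = d)

open IsDedekindDomain NumberField

/-- The finite places of a number field `K`, i.e. the nonzero primes of its ring of
integers.  (Archimedean places impose no good-reduction conditions, so a finite set `S`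
of places containing all archimedean ones is modelled by its finite set of
nonarchimedean members.) -/
abbrev NFPlace (K : Type*) [Field K] [NumberField K] := HeightOneSpectrum (𝓞 K)

variable {K : Type*} [Field K] [NumberField K]

/-- `x ∈ R_S`: `x` is integral at every place outside `S`. -/
def SInteger (S : Set (NFPlace K)) (x : K) : Prop :=
  ∀ v : NFPlace K, v ∉ S → v.valuation K x ≤ 1

/-- `x ∈ R_S^×`: `x` is a unit at every place outside `S`. -/
def SUnit (S : Set (NFPlace K)) (x : K) : Prop :=
  x ≠ 0 ∧ ∀ v : NFPlace K, v ∉ S → v.valuation K x = 1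

section Ext

variable {Kb : Type*} [Field Kb] [Algebra K Kb]

/-- A valuation subring `O` of an extension `Kb` of `K` lies over the place `v` of `K`
if its restriction to `K` is exactly the valuation ring of `v`. -/
def LiesOver (O : ValuationSubring Kb) (v : NFPlace K) : Prop :=
  ∀ x : K, algebraMap K Kb x ∈ O ↔ v.valuation K x ≤ 1

/-- A set `X` of points of the projective line over an extension of `K` has good
reduction outside `S` if for every place `v ∉ S` and every extension of `v`
(i.e. every valuation subring lying over `v`), reduction is injective on `X`. -/
def GoodRedPoints (S : Set (NFPlace K)) (X : Set (ProjLine Kb)) : Prop :=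
  ∀ v : NFPlace K, v ∉ S → ∀ O : ValuationSubring Kb, LiesOver O v →
    Set.InjOn (ProjLine.red O) X

/-- `X` is stable under the action of `Gal(Kb/K)`. -/
def GalInvariant (X : Set (ProjLine Kb)) : Prop :=
  ∀ σ : Kb ≃ₐ[K] Kb, ∀ P ∈ X, Option.map (⇑σ) P ∈ X

end Ext

variable (K) in
/-- A triple `(f, Y, X)` consisting of (the dehomogenized description of) a rational
map and two sets of points of `P¹(K̄)`. -/
structure DynTriple where
  p : K[X]
  q : K[X]
  Y : Set (ProjLine (AlgebraicClosure K))
  X : Set (ProjLine (AlgebraicClosure K))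

/-- Base change of a polynomial over `K` to the algebraic closure. -/
def polyBar (p : K[X]) : (AlgebraicClosure K)[X] := p.map (algebraMap K (AlgebraicClosure K))

/-- Base change of a matrix over `K` to the algebraic closure. -/
def matBar (M : Matrix (Fin 2) (Fin 2) K) : Matrix (Fin 2) (Fin 2) (AlgebraicClosure K) :=
  M.map (algebraMap K (AlgebraicClosure K))

/-- `f` (given by the pair `(p,q)` of degree `d`) has simple good reduction outside `S`:
some `PGL₂(K)`-conjugate of `f` is given by a pair of `S`-integral polynomials whose
resultant is an `S`-unit. -/
def SimpleGoodRed (S : Set (NFPlace K)) (d : ℕ) (p q : K[X]) : Prop :=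
  ∃ (M : Matrix (Fin 2) (Fin 2) K) (p' q' : K[X]),
    M.det ≠ 0 ∧
    IsRatMapOfDeg d p' q' ∧
    (∀ n, SInteger S (p'.coeff n)) ∧ (∀ n, SInteger S (q'.coeff n)) ∧
    SUnit S (ProjLine.resultant d d p' q') ∧
    ∀ P : ProjLine K,
      ProjLine.mobius M (ProjLine.eval d p' q' P)
        = ProjLine.eval d p q (ProjLine.mobius M P)

/-- Membership in `𝐺𝑅̃¹_d[n](K,S)`:  `(f, Y, X)` with `f` of degree `d`, `X = Y ∪ f(Y)`
finite and Galois invariant, total ramification weight `n` on `Y`, and `X` of good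
reduction outside `S`.  (No good-reduction requirement on `f` itself.) -/
def MemGRtilde (S : Set (NFPlace K)) (d n : ℕ) (t : DynTriple K) : Prop :=
  IsRatMapOfDeg d t.p t.q ∧
  t.Y.Finite ∧
  t.X = t.Y ∪ (ProjLine.eval d (polyBar t.p) (polyBar t.q) '' t.Y) ∧
  GalInvariant (K := K) t.X ∧
  (∑ᶠ P ∈ t.Y, ProjLine.ram d (polyBar t.p) (polyBar t.q) P) = n ∧
  GoodRedPoints S t.X

/-- Membership in `𝐺𝑅¹_d[n](K,S)`: as in `MemGRtilde`, and in addition `f` has simple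
good reduction outside `S`. -/
def MemGR (S : Set (NFPlace K)) (d n : ℕ) (t : DynTriple K) : Prop :=
  MemGRtilde S d n t ∧ SimpleGoodRed S d t.p t.q

/-- Two triples are `PGL₂(R_S)`-equivalent:  `t' = φ⁻¹ ∘ t ∘ φ` for some `φ = M` with
`S`-integral entries and `S`-unit determinant. -/
def TripleEquiv (S : Set (NFPlace K)) (d : ℕ) (t t' : DynTriple K) : Prop :=
  ∃ M : Matrix (Fin 2) (Fin 2) K,
    (∀ i j, SInteger S (M i j)) ∧ SUnit S M.det ∧
    (∀ P, ProjLine.mobius (matBar M) (ProjLine.eval d (polyBar t'.p) (polyBar t'.q) P)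
        = ProjLine.eval d (polyBar t.p) (polyBar t.q) (ProjLine.mobius (matBar M) P)) ∧
    ProjLine.mobius (matBar M) '' t'.Y = t.Y ∧
    ProjLine.mobius (matBar M) '' t'.X = t.X

end

noncomputable section
open Polynomial

/-- The numerator `a₀x^d + a₁x^{d-1} + ⋯ + a_{d-2}x² + x + a_d` of the map `f_𝐚` of
Proposition 5.1 (note there is no `a_{d-1}` term: the coefficient of `x` is `1`). -/
def tuplePoly (L : Type*) [Field L] (d : ℕ) (a : ℕ → L) : L[X] :=
  (∑ i ∈ Finset.range (d - 1), C (a i) * X ^ (d - i)) + X + C (a d)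

end

noncomputable section
open Polynomial

/-!
If `φ` conjugates `f_𝐛` to `f_𝐚` and `φ(∞) ≠ ∞`, then `z = φ⁻¹(∞)` is a finite fixed point of
`f_𝐛` (as `∞` is fixed by `f_𝐚`), and `f_𝐛` ramifies at `z` to order `d - 1 ≥ 2`, the
ramification of `f_𝐚` at `∞`. So `φ` fixes `∞`; since `f_𝐚` and `f_𝐛` both map `0`, and only `0`,
to `∞`, it also fixes `0`, so `φ(x) = s x`. Then `f_𝐚(s x) = s f_𝐛(x)`, and comparing the
coefficients of `x`, which are `1` on both sides, gives `s = 1` and `𝐚 = 𝐛`.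
-/

namespace Polynomial

theorem eq_of_eval_eq_of_eval_ne_zero {R : Type*} [CommRing R] [IsDomain R] [Infinite R]
    {p q r : R[X]} (hr : r ≠ 0) (h : ∀ x, r.eval x ≠ 0 → p.eval x = q.eval x) : p = q :=
  eq_of_infinite_eval_eq p q <| (finite_setOfPred_isRoot hr).infinite_compl.mono fun x hx => h x hx

section homogComp

variable {R : Type*} [CommRing R] {d : ℕ} {p A B : R[X]} {x : R}

/-- The polynomial `B ^ d * p (A / B)`. -/
def homogComp (d : ℕ) (p A B : R[X]) : R[X] :=
  ∑ j ∈ Finset.range (d + 1), C (p.coeff j) * A ^ j * B ^ (d - j)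

theorem eval_homogComp_of_eval_eq_zero (hB : B.eval x = 0) :
    (homogComp d p A B).eval x = p.coeff d * A.eval x ^ d := by
  rw [homogComp, eval_finsetSum, Finset.sum_eq_single_of_mem d (Finset.self_mem_range_succ d)]
  · simp
  · intro j hj hjd
    have : 0 < d - j := by rw [Finset.mem_range] at hj; omega
    simp [hB, zero_pow this.ne']

theorem eval_homogComp {K : Type*} [Field K] {p A B : K[X]} {x : K} (hp : p.natDegree ≤ d)
    (hB : B.eval x ≠ 0) :
    (homogComp d p A B).eval x = p.eval (A.eval x / B.eval x) * B.eval x ^ d := by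
  rw [homogComp, eval_eq_sum_range' (Nat.lt_succ_of_le hp), eval_finsetSum, Finset.sum_mul]
  refine Finset.sum_congr rfl fun j hj => ?_
  rw [Finset.mem_range] at hj
  rw [div_pow, ← pow_mul_pow_sub (B.eval x) (by omega : j ≤ d)]
  simp only [eval_mul, eval_C, eval_pow]
  field_simp

end homogComp

theorem eq_one_of_comp_C_mul_X_eq {K : Type*} [Field K] {p q : K[X]} {s : K} (hs : s ≠ 0)
    (h1 : p.coeff 1 = q.coeff 1) (hq1 : q.coeff 1 ≠ 0) (h : p.comp (C s * X) = C (s ^ 2) * q) :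
    s = 1 := by
  have h' := congrArg (coeff · 1) h
  simp only [comp_C_mul_X_coeff, coeff_C_mul, pow_one, h1] at h'
  have : q.coeff 1 * s * (s - 1) = 0 := by linear_combination -h'
  simpa [hq1, hs, sub_eq_zero] using this

end Polynomial

namespace ProjLine

variable {L : Type*} [Field L] {M : Matrix (Fin 2) (Fin 2) L} {d : ℕ} {p q : L[X]} {x : L}

/-- Row `i` of `M * (p, q)ᵀ`: the numerator (`i = 0`) or denominator (`i = 1`) of `M ∘ (p / q)`. -/
def mobiusRow (M : Matrix (Fin 2) (Fin 2) L) (i : Fin 2) (p q : L[X]) : L[X] :=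
  C (M i 0) * p + C (M i 1) * q

@[simp]
theorem eval_mobiusRow (i : Fin 2) :
    (mobiusRow M i p q).eval x = M i 0 * p.eval x + M i 1 * q.eval x := by
  simp [mobiusRow]

theorem mobius_some (h : M 1 0 * x + M 1 1 ≠ 0) :
    mobius M (some x) = some ((M 0 0 * x + M 0 1) / (M 1 0 * x + M 1 1)) := by
  simp [mobius, h]

theorem mobius_none (h : M 1 0 = 0) : mobius M none = none := by
  simp [mobius, h]

theorem mobius_some_of_isDiag (h10 : M 1 0 = 0) (h01 : M 0 1 = 0) (h11 : M 1 1 ≠ 0) (x : L) :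
    mobius M (some x) = some (M 0 0 / M 1 1 * x) := by
  rw [mobius_some (by simpa [h10] using h11)]
  simp only [h10, h01, zero_mul, zero_add, add_zero, div_mul_eq_mul_div]

theorem mobius_eq_self (h10 : M 1 0 = 0) (h01 : M 0 1 = 0) (h : M 0 0 = M 1 1)
    (h11 : M 1 1 ≠ 0) (P : ProjLine L) : mobius M P = P := by
  cases P with
  | none => exact mobius_none h10
  | some x => rw [mobius_some_of_isDiag h10 h01 h11, h, div_self h11, one_mul]

theorem eval_X_some (hx : x ≠ 0) : eval d p X (some x) = some (p.eval x / x) := by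
  simp [eval, evalAt, hx]

theorem eval_X_some_zero : eval d p X (some 0) = none := by
  simp [eval, evalAt]

theorem ram_X_some (hx : x ≠ 0) :
    ram d p X (some x) = rootMultiplicity x (C x * p - C (p.eval x) * X) := by
  simp [ram, ramAt, hx]

theorem eval_X_some_eq_self_and_two_le_ram {z : L} (hp : p.eval 0 ≠ 0)
    (h : (X - C z) ^ 2 ∣ p - C z * X) :
    eval d p X (some z) = some z ∧ 2 ≤ ram d p X (some z) := by
  have hz : z ≠ 0 := by
    rintro rfl
    apply hp
    simpa using eval_eq_zero_of_dvd_of_eval_eq_zero h (by simp)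
  have hpz : p.eval z = z * z := by
    have := eval_eq_zero_of_dvd_of_eval_eq_zero h (by simp : Polynomial.eval z ((X - C z) ^ 2) = 0)
    simp only [eval_sub, eval_mul, eval_C, eval_X] at this
    linear_combination this
  have hne : p - C z * X ≠ 0 := fun h0 => hp (by simpa using congrArg (Polynomial.eval 0) h0)
  refine ⟨by rw [eval_X_some hz, hpz, mul_div_cancel_right₀ z hz], ?_⟩
  rw [ram_X_some hz, hpz, C_mul, mul_assoc, ← mul_sub]
  rw [rootMultiplicity_mul (mul_ne_zero (C_ne_zero.mpr hz) hne), rootMultiplicity_C, zero_add]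
  exact (le_rootMultiplicity_iff hne).mpr h

theorem homogComp_mul_mobiusRow_eq [Infinite L] (hd : d ≠ 0) (hp : p.natDegree ≤ d)
    (hB : mobiusRow M 1 X 1 ≠ 0) (hD : mobiusRow M 1 q X ≠ 0)
    (hconj : ∀ x : L, mobius M (eval d q X (some x)) = eval d p X (mobius M (some x))) :
    homogComp d p (mobiusRow M 0 X 1) (mobiusRow M 1 X 1) * mobiusRow M 1 q X =
      mobiusRow M 0 q X * mobiusRow M 0 X 1 * mobiusRow M 1 X 1 ^ (d - 1) := by
  refine eq_of_eval_eq_of_eval_ne_zero (mul_ne_zero (mul_ne_zero X_ne_zero hB) hD) fun x hx => ?_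
  simp only [eval_mul, eval_X, ne_eq, mul_eq_zero, not_or] at hx
  obtain ⟨⟨hx, hBx⟩, hDx⟩ := hx
  simp only [eval_mobiusRow, eval_X, eval_one, mul_one] at hBx hDx
  have hqx : M 1 0 * (q.eval x / x) + M 1 1 ≠ 0 := by
    intro h0
    apply hDx
    field_simp at h0
    linear_combination h0
  have h := hconj x
  rw [eval_X_some hx, mobius_some hqx, mobius_some hBx] at h
  obtain ⟨u, hu_def⟩ : ∃ u, (M 0 0 * x + M 0 1) / (M 1 0 * x + M 1 1) = u := ⟨_, rfl⟩
  rw [hu_def] at h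
  have hu : u ≠ 0 := by
    rintro hu
    rw [hu, eval_X_some_zero] at h
    exact Option.some_ne_none _ h
  rw [eval_X_some hu, Option.some_inj] at h
  rw [eval_mul, eval_mul, eval_mul, eval_pow, eval_homogComp hp (by simpa using hBx)]
  simp only [eval_mobiusRow, eval_X, eval_one, mul_one, hu_def]
  have ha : M 0 0 * x + M 0 1 = u * (M 1 0 * x + M 1 1) := by
    rw [← hu_def, div_mul_cancel₀ _ hBx]
  have key : (M 0 0 * q.eval x + M 0 1 * x) * u = p.eval u * (M 1 0 * q.eval x + M 1 1 * x) := by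
    rw [div_eq_div_iff hqx hu] at h
    rw [← div_mul_cancel₀ (q.eval x) hx]
    linear_combination x * h
  rw [← pow_sub_one_mul hd, ha]
  linear_combination (-(M 1 0 * x + M 1 1) ^ (d - 1) * (M 1 0 * x + M 1 1)) * key

theorem pow_dvd_sub_C_mul_X_of_conj [Infinite L] (hd : d ≠ 0) (hp : p.natDegree ≤ d)
    (hpd : p.coeff d ≠ 0) (hq0 : q.eval 0 ≠ 0) (hM : M.det ≠ 0) (h10 : M 1 0 ≠ 0) {z : L}
    (hz : M 1 0 * z + M 1 1 = 0)
    (hconj : ∀ x : L, mobius M (eval d q X (some x)) = eval d p X (mobius M (some x))) :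
    (X - C z) ^ (d - 1) ∣ q - C z * X := by
  have hCz : C (M 1 1) = -(C (M 1 0) * C z) := by
    rw [← C_mul, ← C_neg, eq_neg_of_add_eq_zero_right hz]
  have hB : mobiusRow M 1 X 1 = C (M 1 0) * (X - C z) := by
    rw [mobiusRow, hCz]
    ring
  have hD : mobiusRow M 1 q X = C (M 1 0) * (q - C z * X) := by
    rw [mobiusRow, hCz]
    ring
  have hCu : IsUnit (C (M 1 0)) := isUnit_C.mpr h10.isUnit
  have hR : q - C z * X ≠ 0 := fun h => hq0 (by simpa using congrArg (Polynomial.eval 0) h)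
  have hA : (mobiusRow M 0 X 1).eval z ≠ 0 := by
    intro h
    apply hM
    simp only [eval_mobiusRow, eval_X, eval_one, mul_one] at h
    rw [Matrix.det_fin_two]
    linear_combination M 0 0 * hz - M 1 0 * h
  have hP : ¬ (X - C z) ∣ homogComp d p (mobiusRow M 0 X 1) (mobiusRow M 1 X 1) := by
    rw [dvd_iff_isRoot, IsRoot, eval_homogComp_of_eval_eq_zero (by simp [hB])]
    exact mul_ne_zero hpd (pow_ne_zero d hA)
  have hstar := homogComp_mul_mobiusRow_eq hd hp
    (by rw [hB]; exact mul_ne_zero hCu.ne_zero (X_sub_C_ne_zero z))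
    (by rw [hD]; exact mul_ne_zero hCu.ne_zero hR) hconj
  have hdvd : (X - C z) ^ (d - 1) ∣
      homogComp d p (mobiusRow M 0 X 1) (mobiusRow M 1 X 1) * (C (M 1 0) * (q - C z * X)) := by
    rw [← hD, hstar, hB, mul_pow]
    exact dvd_mul_of_dvd_right (dvd_mul_left _ _) _
  exact hCu.dvd_mul_left.mp ((prime_X_sub_C z).pow_dvd_of_dvd_mul_left _ hP hdvd)

theorem entry_zero_one_eq_zero_of_conj (h10 : M 1 0 = 0) (h11 : M 1 1 ≠ 0)
    (h : mobius M (eval d q X (some 0)) = eval d p X (mobius M (some 0))) : M 0 1 = 0 := by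
  rw [eval_X_some_zero, mobius_none h10, mobius_some (by simpa [h10] using h11)] at h
  by_contra h01
  rw [eval_X_some (by simpa [h10] using div_ne_zero h01 h11)] at h
  exact Option.some_ne_none _ h.symm

theorem comp_C_mul_X_eq_of_conj [Infinite L] (h10 : M 1 0 = 0) (h01 : M 0 1 = 0)
    (h00 : M 0 0 ≠ 0) (h11 : M 1 1 ≠ 0)
    (hconj : ∀ x : L, mobius M (eval d q X (some x)) = eval d p X (mobius M (some x))) :
    p.comp (C (M 0 0 / M 1 1) * X) = C ((M 0 0 / M 1 1) ^ 2) * q := by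
  refine eq_of_eval_eq_of_eval_ne_zero X_ne_zero fun x hx => ?_
  rw [eval_X] at hx
  have h := hconj x
  rw [eval_X_some hx, mobius_some_of_isDiag h10 h01 h11, mobius_some_of_isDiag h10 h01 h11,
    eval_X_some (mul_ne_zero (div_ne_zero h00 h11) hx), Option.some_inj] at h
  rw [eq_div_iff (mul_ne_zero (div_ne_zero h00 h11) hx)] at h
  simp only [eval_comp, eval_mul, eval_C, eval_X, ← h]
  field_simp

end ProjLine

section tuplePoly

variable {L : Type*} [Field L] {d : ℕ} {a b : ℕ → L}

theorem coeff_tuplePoly (k : ℕ) :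
    (tuplePoly L d a).coeff k =
      (if 2 ≤ k ∧ k ≤ d then a (d - k) else 0) + (if k = 1 then 1 else 0)
        + (if k = 0 then a d else 0) := by
  rw [tuplePoly, coeff_add, coeff_add, finsetSum_coeff, coeff_X, coeff_C]
  congr 2
  · split_ifs with hk
    · rw [Finset.sum_eq_single_of_mem (d - k) (Finset.mem_range.mpr (by omega))]
      · rw [coeff_C_mul, coeff_X_pow, if_pos (by omega), mul_one]
      · intro i hi hik
        rw [Finset.mem_range] at hi
        rw [coeff_C_mul, coeff_X_pow, if_neg (by omega), mul_zero]
    · refine Finset.sum_eq_zero fun i hi => ?_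
      rw [Finset.mem_range] at hi
      rw [coeff_C_mul, coeff_X_pow, if_neg (by omega), mul_zero]
  · simp only [eq_comm]

@[simp]
theorem coeff_tuplePoly_zero : (tuplePoly L d a).coeff 0 = a d := by
  simp [coeff_tuplePoly]

@[simp]
theorem coeff_tuplePoly_one : (tuplePoly L d a).coeff 1 = 1 := by
  simp [coeff_tuplePoly]

theorem coeff_tuplePoly_sub {i : ℕ} (hd : 2 ≤ d) (hi : i ≤ d - 2) :
    (tuplePoly L d a).coeff (d - i) = a i := by
  rw [coeff_tuplePoly, if_pos (by omega), if_neg (by omega), if_neg (by omega),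
    Nat.sub_sub_self (by omega : i ≤ d)]
  ring

theorem natDegree_tuplePoly_le (hd : 1 ≤ d) : (tuplePoly L d a).natDegree ≤ d :=
  natDegree_le_iff_coeff_eq_zero.mpr fun k hk => by
    rw [coeff_tuplePoly, if_neg (by omega), if_neg (by omega), if_neg (by omega)]
    ring

theorem eq_of_tuplePoly_eq (hd : 2 ≤ d) (h : tuplePoly L d a = tuplePoly L d b) :
    (∀ i, i ≤ d - 2 → a i = b i) ∧ a d = b d :=
  ⟨fun i hi => by rw [← coeff_tuplePoly_sub (a := a) hd hi, h, coeff_tuplePoly_sub hd hi],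
    by rw [← coeff_tuplePoly_zero (a := a), h, coeff_tuplePoly_zero]⟩

end tuplePoly

theorem tuple_family_injective_general
    (L : Type*) [Field L] [CharZero L]
    (d : ℕ) (hd : 3 ≤ d)
    (a b : ℕ → L) (ha0 : a 0 ≠ 0) (hbd : b d ≠ 0)
    (hrb : ∀ P : ProjLine L,
      ProjLine.eval d (tuplePoly L d b) (X : L[X]) P = P →
      2 ≤ ProjLine.ram d (tuplePoly L d b) (X : L[X]) P → P = none)
    (M : Matrix (Fin 2) (Fin 2) L) (hM : M.det ≠ 0)
    (hconj : ∀ P : ProjLine L,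
      ProjLine.mobius M (ProjLine.eval d (tuplePoly L d b) (X : L[X]) P)
        = ProjLine.eval d (tuplePoly L d a) (X : L[X]) (ProjLine.mobius M P)) :
    (∀ P : ProjLine L, ProjLine.mobius M P = P) ∧
    (∀ i, i ≤ d - 2 → a i = b i) ∧ a d = b d := by
  have hb : (tuplePoly L d b).eval 0 ≠ 0 := by
    rwa [← coeff_zero_eq_eval_zero, coeff_tuplePoly_zero]
  have h10 : M 1 0 = 0 := by
    by_contra h10
    have hdvd := ProjLine.pow_dvd_sub_C_mul_X_of_conj (by omega) (natDegree_tuplePoly_le (by omega))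
      (by simpa using (coeff_tuplePoly_sub (a := a) (i := 0) (by omega) (by omega)).trans_ne ha0)
      hb hM h10 (z := -(M 1 1 / M 1 0)) (by field_simp; ring) fun x => hconj (some x)
    obtain ⟨hfix, hram⟩ :=
      ProjLine.eval_X_some_eq_self_and_two_le_ram hb ((pow_dvd_pow _ (by omega)).trans hdvd)
    exact Option.some_ne_none _ (hrb _ hfix hram)
  have h11 : M 1 1 ≠ 0 := fun h => hM (by simp [Matrix.det_fin_two, h10, h])
  have h00 : M 0 0 ≠ 0 := fun h => hM (by simp [Matrix.det_fin_two, h10, h])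
  have h01 := ProjLine.entry_zero_one_eq_zero_of_conj h10 h11 (hconj (some 0))
  have hcomp := ProjLine.comp_C_mul_X_eq_of_conj h10 h01 h00 h11 fun x => hconj (some x)
  have hs : M 0 0 / M 1 1 = 1 :=
    eq_one_of_comp_C_mul_X_eq (div_ne_zero h00 h11) (by simp) (by simp) hcomp
  rw [hs] at hcomp
  exact ⟨ProjLine.mobius_eq_self h10 h01 ((div_eq_one_iff_eq h11).mp hs) h11,
    eq_of_tuplePoly_eq (by omega) (by simpa using hcomp)⟩

/-- **Proposition 5.1 (generic injectivity of `𝐚 ↦ ⟨f_𝐚⟩`, case `d ≥ 3`).**  Let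
`f_𝐚(x) = (a₀x^d + ⋯ + a_{d-2}x² + x + a_d)/x` with `a₀, a_d ≠ 0`, and similarly
`f_𝐛`.  Assume that for each of `f_𝐚` and `f_𝐛` the point `∞` is the only ramified
fixed point.  If `φ ∈ PGL₂` conjugates `f_𝐚` to `f_𝐛`, then `φ` is the identity and
`𝐚 = 𝐛`. -/
theorem tuple_family_injective
    (L : Type*) [Field L] [IsAlgClosed L] [CharZero L]
    (d : ℕ) (hd : 3 ≤ d)
    (a b : ℕ → L) (ha0 : a 0 ≠ 0) (had : a d ≠ 0) (hb0 : b 0 ≠ 0) (hbd : b d ≠ 0)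
    (hra : ∀ P : ProjLine L,
      ProjLine.eval d (tuplePoly L d a) (X : L[X]) P = P →
      2 ≤ ProjLine.ram d (tuplePoly L d a) (X : L[X]) P → P = none)
    (hrb : ∀ P : ProjLine L,
      ProjLine.eval d (tuplePoly L d b) (X : L[X]) P = P →
      2 ≤ ProjLine.ram d (tuplePoly L d b) (X : L[X]) P → P = none)
    (M : Matrix (Fin 2) (Fin 2) L) (hM : M.det ≠ 0)
    (hconj : ∀ P : ProjLine L,
      ProjLine.mobius M (ProjLine.eval d (tuplePoly L d b) (X : L[X]) P)
        = ProjLine.eval d (tuplePoly L d a) (X : L[X]) (ProjLine.mobius M P)) :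
    (∀ P : ProjLine L, ProjLine.mobius M P = P) ∧
    (∀ i, i ≤ d - 2 → a i = b i) ∧ a d = b d :=
  tuple_family_injective_general L d hd a b ha0 hbd hrb M hM hconj

end
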